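/- arXiv:1001.1600 — 9 statements merged into one kernel-verified Lean document; each statement's English description precedes it below -/
import Mathlib

section
/- Let p be a prime and let G be a group with a normal subgroup H of index p such that H is a finite, nontrivial, abelian p-group. If there exists a simple virtual endomorphism φ : H → G, then there exists an element a ∈ G \ H with a^p = 1, and every element of H has order dividing p (so H is elementary abelian). -/
/-!
Put `Ω = {x ∈ H | x ^ p = 1}` and `℧ = {h ^ p | h ∈ H}`, normal subgroups of `G` inside `H`.
A homomorphism cannot increase orders, so `φ` maps `Ω` into `Ω` as soon as it maps `Ω` into `H`;
since `Ω ≠ 1` and `φ` is simple, `a = φ x ∉ H` for some `x ∈ Ω`, and `a ^ p = 1`.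
As `G / H` has prime order, `aH` generates it, so each `h ∈ H` can be corrected to `u = h x⁻ˡ`
with `φ u ∈ H`; since `x ^ p = 1`, `φ (h ^ p) = φ (u ^ p) = (φ u) ^ p ∈ ℧`. Hence `℧` is
`φ`-invariant, so it is trivial.
-/

open Subgroup

open scoped IsMulCommutative

theorem IsPGroup.exists_orderOf_eq_prime {p : ℕ} [hp : Fact p.Prime] {G : Type*} [Group G]
    [Nontrivial G] (hG : IsPGroup p G) : ∃ g : G, orderOf g = p := by
  obtain ⟨g, hg⟩ := exists_ne (1 : G)
  exact ⟨g ^ (orderOf g / p), orderOf_pow_orderOf_div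
    (hG.isOfFinOrder hp.out.ne_zero g).orderOf_pos.ne' (hG.dvd_orderOf hg)⟩

namespace Subgroup

variable {G : Type*} [Group G] (H : Subgroup G) [IsMulCommutative H] (n : ℕ)

def powKer : Subgroup G where
  carrier := {x | x ∈ H ∧ x ^ n = 1}
  one_mem' := ⟨H.one_mem, one_pow n⟩
  mul_mem' := fun {x y} ⟨hx, hxn⟩ ⟨hy, hyn⟩ =>
    ⟨H.mul_mem hx hy, by rw [Commute.mul_pow (setLike_mul_comm hx hy), hxn, hyn, one_mul]⟩
  inv_mem' := fun {x} ⟨hx, hxn⟩ => ⟨H.inv_mem hx, by rw [inv_pow, hxn, inv_one]⟩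

def powRange : Subgroup G where
  carrier := {x | ∃ h ∈ H, h ^ n = x}
  one_mem' := ⟨1, H.one_mem, one_pow n⟩
  mul_mem' := by
    rintro _ _ ⟨h, hh, rfl⟩ ⟨k, hk, rfl⟩
    exact ⟨h * k, H.mul_mem hh hk, Commute.mul_pow (setLike_mul_comm hh hk) n⟩
  inv_mem' := by
    rintro _ ⟨h, hh, rfl⟩
    exact ⟨h⁻¹, H.inv_mem hh, inv_pow h n⟩

variable {H n} in
theorem mem_powRange {x : G} : x ∈ H.powRange n ↔ ∃ h ∈ H, h ^ n = x := Iff.rfl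

theorem powKer_le : H.powKer n ≤ H := fun _ hx => hx.1

theorem powRange_le : H.powRange n ≤ H := by
  rintro _ ⟨h, hh, rfl⟩
  exact H.pow_mem hh n

instance [H.Normal] : (H.powKer n).Normal where
  conj_mem x := fun ⟨hx, hxn⟩ g =>
    ⟨‹H.Normal›.conj_mem x hx g, by rw [conj_pow, hxn, mul_one, mul_inv_cancel]⟩

instance [H.Normal] : (H.powRange n).Normal where
  conj_mem := by
    rintro _ ⟨h, hh, rfl⟩ g
    exact ⟨g * h * g⁻¹, ‹H.Normal›.conj_mem h hh g, conj_pow⟩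

theorem powKer_ne_bot {p : ℕ} [Fact p.Prime] (hH : IsPGroup p H) (hne : H ≠ ⊥) :
    H.powKer p ≠ ⊥ := by
  have : Nontrivial H := H.nontrivial_iff_ne_bot.mpr hne
  obtain ⟨g, hg⟩ := hH.exists_orderOf_eq_prime
  refine (H.powKer p).ne_bot_iff_exists_ne_one.mpr ⟨⟨g, g.2, ?_⟩, ?_⟩
  · rw [← SubgroupClass.coe_pow, ← hg, pow_orderOf_eq_one, OneMemClass.coe_one]
  · intro h
    apply (Fact.out : p.Prime).ne_one
    rw [← hg, orderOf_eq_one_iff]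
    exact Subtype.ext (Subtype.ext_iff.mp h :)

theorem powRange_eq_bot_iff : H.powRange n = ⊥ ↔ ∀ h ∈ H, h ^ n = 1 := by
  simp only [eq_bot_iff_forall, mem_powRange, forall_exists_index, and_imp,
    forall_apply_eq_imp_iff₂]

variable {H n}

theorem map_mem_powKer {φ : H →* G} {x : G} (hx : x ∈ H.powKer n)
    (hφx : φ ⟨x, H.powKer_le n hx⟩ ∈ H) :
    φ ⟨x, H.powKer_le n hx⟩ ∈ H.powKer n := by
  refine ⟨hφx, ?_⟩
  rw [← map_pow, ← map_one φ]
  exact congrArg φ (Subtype.ext hx.2)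

theorem map_mem_powRange [H.Normal] {φ : H →* G} {x₀ : H} (hx₀ : x₀ ^ n = 1)
    (hgen : zpowers (φ x₀ : G ⧸ H) = ⊤) {x : G} (hx : x ∈ H.powRange n) :
    φ ⟨x, H.powRange_le n hx⟩ ∈ H.powRange n := by
  obtain ⟨h, hh, rfl⟩ := hx
  obtain ⟨l, hl⟩ := mem_zpowers_iff.mp (hgen ▸ mem_top (φ ⟨h, hh⟩ : G ⧸ H))
  set u : H := ⟨h, hh⟩ * x₀ ^ (-l)
  have hφu : (φ u : G) ∈ H := by
    rw [← QuotientGroup.eq_one_iff, map_mul, map_zpow, QuotientGroup.mk_mul,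
      QuotientGroup.mk_zpow, ← hl, zpow_neg, mul_inv_cancel]
  have hu : u ^ n = ⟨h, hh⟩ ^ n := by
    rw [mul_pow, ← zpow_natCast (x₀ ^ (-l)), zpow_comm, zpow_natCast, hx₀, one_zpow, mul_one]
  exact ⟨φ u, hφu, by rw [← map_pow, hu]; rfl⟩

end Subgroup

theorem simple_virtual_endomorphism_implies_split_and_elementary_abelian_general
    (p : ℕ) (hp : p.Prime) (G : Type*) [Group G]
    (H : Subgroup G) [H.Normal] (hidx : H.index = p)
    (hne : H ≠ ⊥)
    (hab : ∀ a b : G, a ∈ H → b ∈ H → a * b = b * a)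
    (hpG : IsPGroup p H)
    (hsimple : ∃ φ : H →* G, ∀ N : Subgroup G, N.Normal → ∀ hle : N ≤ H,
        (∀ x, ∀ hx : x ∈ N, φ ⟨x, hle hx⟩ ∈ N) → N = ⊥) :
    (∃ a : G, a ∉ H ∧ a ^ p = 1) ∧ ∀ h ∈ H, h ^ p = 1 := by
  have : Fact p.Prime := ⟨hp⟩
  have : IsMulCommutative H := ⟨⟨fun a b => Subtype.ext (hab a b a.2 b.2)⟩⟩
  obtain ⟨φ, hφ⟩ := hsimple
  obtain ⟨x, hxp, hφx⟩ : ∃ x : H, x ^ p = 1 ∧ φ x ∉ H := by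
    by_contra! h
    exact H.powKer_ne_bot hpG hne <| hφ _ inferInstance (H.powKer_le p) fun y hy =>
      map_mem_powKer hy (h _ (Subtype.ext hy.2))
  have hgen : zpowers (φ x : G ⧸ H) = ⊤ :=
    zpowers_eq_top_of_prime_card hidx (by rwa [ne_eq, QuotientGroup.eq_one_iff])
  refine ⟨⟨φ x, hφx, by rw [← map_pow, hxp, map_one]⟩, (H.powRange_eq_bot_iff p).mp ?_⟩
  exact hφ _ inferInstance (H.powRange_le p) fun y hy => map_mem_powRange hxp hgen hy

/-- **Forward direction of the main theorem.**
If `G` has a normal subgroup `H` of index `p` which is a finite, nontrivial,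
abelian `p`-group, and there exists a simple virtual endomorphism
`φ : H → G`, then the extension splits (there is `a ∈ G \ H` with
`a ^ p = 1`) and `H` is elementary abelian. -/
theorem simple_virtual_endomorphism_implies_split_and_elementary_abelian
    (p : ℕ) (hp : p.Prime) (G : Type*) [Group G]
    (H : Subgroup G) [H.Normal] (hidx : H.index = p)
    [Finite H] (hne : H ≠ ⊥)
    (hab : ∀ a b : G, a ∈ H → b ∈ H → a * b = b * a)
    (hpG : IsPGroup p H)
    (hsimple : ∃ φ : H →* G, ∀ N : Subgroup G, N.Normal → ∀ hle : N ≤ H,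
        (∀ x, ∀ hx : x ∈ N, φ ⟨x, hle hx⟩ ∈ N) → N = ⊥) :
    (∃ a : G, a ∉ H ∧ a ^ p = 1) ∧ ∀ h ∈ H, h ^ p = 1 :=
  simple_virtual_endomorphism_implies_split_and_elementary_abelian_general p hp G H hidx hne hab hpG
    hsimple
end

section
/- Let p be a prime and let G be a group with a normal subgroup H of index p such that H is a finite, nontrivial, abelian group in which every element has order dividing p (an elementary abelian p-group). If there exists an element a ∈ G \ H with a^p = 1, then there exists a simple virtual endomorphism φ : H → G, i.e., a group homomorphism φ : H → G such that the only φ-invariant normal subgroup of G contained in H is the trivial subgroup. -/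
/-!
Regard `H` as an `𝔽_p`-vector space `V` on which `a` acts by conjugation as a map `A` with
`A ^ p = 1`, so that `A - 1` is nilpotent. Identify the fixed space `F = C_H(a)` with `𝔽_{p^f}`;
let `σ` be a projection of `V` onto `F` followed by multiplication by a generator of `𝔽_{p^f}ˣ`,
and `ℓ` a linear form on `F` with `ℓ 1 ≠ 0`, precomposed with the same projection. Since `σ h`
commutes with `a`, `φ h = σ h * a ^ ℓ h` is a homomorphism. If `N ≤ H` is normal and
`φ`-invariant, then `φ N ⊆ H` forces `ℓ = 0` on `N`, so `N` is `σ`-invariant. If `N ≠ 1`, it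
contains a nonzero fixed vector `w` because `A - 1` is nilpotent, and the `σ`-orbit of `w` runs
through all of `F ∖ 0`, reaching a vector on which `ℓ` does not vanish.
-/

theorem Submodule.exists_mem_ne_zero_apply_eq_zero_of_isNilpotent {R M : Type*} [Semiring R]
    [AddCommMonoid M] [Module R M] {D : Module.End R M} (hD : IsNilpotent D)
    {Q : Submodule R M} (hQ : Q ≠ ⊥) (hDQ : ∀ v ∈ Q, D v ∈ Q) :
    ∃ w ∈ Q, w ≠ 0 ∧ D w = 0 := by
  obtain ⟨n, hn⟩ := hD
  obtain ⟨v, hvQ, hv0⟩ := Q.exists_mem_ne_zero_of_ne_bot hQ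
  replace hn : (D ^ n) v = 0 := by rw [hn]; rfl
  induction n generalizing v with
  | zero => exact absurd hn hv0
  | succ n ih =>
    by_cases hDv : D v = 0
    · exact ⟨v, hvQ, hv0, hDv⟩
    · exact ih (D v) (hDQ v hvQ) hDv (by rwa [← Module.End.mul_apply, ← pow_succ])

theorem isNilpotent_sub_one_of_pow_char_eq_one {R : Type*} [Ring R] (p : ℕ) [Fact p.Prime]
    [Algebra (ZMod p) R] {x : R} (hx : x ^ p = 1) : IsNilpotent (x - 1) := by
  cases subsingleton_or_nontrivial R
  · exact ⟨1, Subsingleton.elim _ _⟩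
  have : CharP R p := charP_of_injective_algebraMap (algebraMap (ZMod p) R).injective p
  exact ⟨p, by rw [sub_pow_char_of_commute p (Commute.one_right x), hx, one_pow, sub_self]⟩

theorem exists_pow_mul_eq_one_of_generator {L : Type*} [Field L] [Finite L] {g : Lˣ}
    (hg : ∀ x, x ∈ Subgroup.zpowers g) {w : L} (hw : w ≠ 0) :
    ∃ n : ℕ, (g : L) ^ n * w = 1 := by
  obtain ⟨n, hn⟩ := mem_powers_iff_mem_zpowers.2 (hg (Units.mk0 w hw)⁻¹)
  exact ⟨n, by simp [← Units.val_pow_eq_pow_val, hn, hw]⟩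

theorem exists_end_dual_pow_apply_ne_zero (p : ℕ) [Fact p.Prime] (F : Type*) [AddCommGroup F]
    [Module (ZMod p) F] [Module.Finite (ZMod p) F] :
    ∃ (T : Module.End (ZMod p) F) (ℓ : F →ₗ[ZMod p] ZMod p),
      ∀ w ≠ 0, ∃ n : ℕ, ℓ ((T ^ n) w) ≠ 0 := by
  by_cases hF : Module.finrank (ZMod p) F = 0
  · have : Subsingleton F := Module.finrank_zero_iff.1 hF
    exact ⟨0, 0, fun w hw => absurd (Subsingleton.elim w 0) hw⟩
  set L := GaloisField p (Module.finrank (ZMod p) F)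
  let e : F ≃ₗ[ZMod p] L := LinearEquiv.ofFinrankEq _ _ (GaloisField.finrank p hF).symm
  obtain ⟨g, hg⟩ := IsCyclic.exists_generator (α := Lˣ)
  obtain ⟨ℓ, hℓ⟩ : ∃ ℓ : Module.Dual (ZMod p) L, ℓ 1 ≠ 0 := by
    by_contra! h
    exact one_ne_zero ((Module.forall_dual_apply_eq_zero_iff (ZMod p) (1 : L)).1 h)
  refine ⟨e.symm.conjRingEquiv (LinearMap.mulLeft (ZMod p) (g : L)), ℓ ∘ₗ e, fun w hw => ?_⟩
  obtain ⟨n, hn⟩ := exists_pow_mul_eq_one_of_generator hg (e.map_ne_zero_iff.2 hw)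
  refine ⟨n, ?_⟩
  simpa [← map_pow, LinearMap.pow_mulLeft, hn] using hℓ

theorem exists_end_dual_of_isNilpotent_sub_one (p : ℕ) [Fact p.Prime] {V : Type*} [AddCommGroup V]
    [Module (ZMod p) V] [Module.Finite (ZMod p) V] {A : Module.End (ZMod p) V}
    (hA : IsNilpotent (A - 1)) :
    ∃ (σ : Module.End (ZMod p) V) (ℓ : V →ₗ[ZMod p] ZMod p), (∀ v, A (σ v) = σ v) ∧
      ∀ Q : Submodule (ZMod p) V, Q ≠ ⊥ → (∀ v ∈ Q, A v ∈ Q) → (∀ v ∈ Q, σ v ∈ Q) →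
        ∃ v ∈ Q, ℓ v ≠ 0 := by
  set F := LinearMap.ker (A - 1)
  obtain ⟨T, ℓ, hTℓ⟩ := exists_end_dual_pow_apply_ne_zero p F
  obtain ⟨W, hFW⟩ := Submodule.exists_isCompl F
  set π := F.projectionOnto W hFW
  have hπ (u : F) : π u = u := Submodule.projectionOnto_apply_left hFW u
  set σ := F.subtype ∘ₗ T ∘ₗ π
  have hσ_pow (n : ℕ) (u : F) : (σ ^ n) (u : V) = ((T ^ n) u : V) := by
    induction n with
    | zero => rfl
    | succ n ih => simp [σ, pow_succ', Module.End.mul_apply, ih, hπ]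
  refine ⟨σ, ℓ ∘ₗ π, fun v => ?_, fun Q hQ hAQ hσQ => ?_⟩
  · exact sub_eq_zero.1 (T (π v)).2
  obtain ⟨w, hwQ, hw0, hw⟩ := Q.exists_mem_ne_zero_apply_eq_zero_of_isNilpotent hA hQ
    fun v hv => by simpa using Q.sub_mem (hAQ v hv) hv
  obtain ⟨n, hn⟩ := hTℓ ⟨w, hw⟩ (by simpa [← Subtype.coe_ne_coe] using hw0)
  refine ⟨_, Module.End.pow_apply_mem_of_forall_mem n hσQ _ hwQ, ?_⟩
  simpa [hσ_pow n ⟨w, hw⟩, hπ] using hn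

section

variable {G : Type*} [Group G] {H : Subgroup G}

def IsSimpleVirtualEndomorphism (φ : H →* G) : Prop :=
  ∀ N : Subgroup G, N.Normal → ∀ hle : N ≤ H, (∀ x, ∀ hx : x ∈ N, φ ⟨x, hle hx⟩ ∈ N) → N = ⊥

theorem isSimpleVirtualEndomorphism_noncommCoprod (s : H →* H) (τ : H →* G)
    (hcomm : ∀ x y, Commute (H.subtype.comp s x) (τ y)) (hτ : ∀ x, τ x ∈ H → τ x = 1)
    (hsep : ∀ N : Subgroup G, N.Normal → N ≤ H → N ≠ ⊥ →
      (∀ x : H, (x : G) ∈ N → (s x : G) ∈ N) → ∃ x : H, (x : G) ∈ N ∧ τ x ≠ 1) :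
    IsSimpleVirtualEndomorphism (((H.subtype.comp s).noncommCoprod τ hcomm).comp
      ((MonoidHom.id H).prod (MonoidHom.id H))) := by
  intro N hN hle hinv
  by_contra hN0
  have hτs (x : H) (hx : (x : G) ∈ N) : τ x = 1 ∧ (s x : G) ∈ N := by
    have hφx : (s x : G) * τ x ∈ N := hinv x hx
    have hτx : τ x = 1 := hτ x <| by simpa using H.mul_mem (H.inv_mem (s x).2) (hle hφx)
    exact ⟨hτx, by simpa [hτx] using hφx⟩
  obtain ⟨x, hxN, hτx⟩ := hsep N hN hle hN0 fun x hx => (hτs x hx).2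
  exact hτx (hτs x hxN).1

section

variable {p : ℕ} [NeZero p] {a : G}

def zmodPowersHom (hap : a ^ p = 1) : Multiplicative (ZMod p) →* G where
  toFun m := a ^ m.toAdd.val
  map_one' := by simp
  map_mul' m n := by simp [ZMod.val_add, ← pow_eq_pow_mod _ hap, pow_add]

theorem zmodPowersHom_mem_iff [Fact p.Prime] [H.Normal] (haH : a ∉ H) (hap : a ^ p = 1)
    (m : Multiplicative (ZMod p)) : zmodPowersHom hap m ∈ H ↔ m = 1 := by
  have horder : orderOf (a : G ⧸ H) = p :=
    orderOf_eq_prime (by rw [← QuotientGroup.mk_pow, hap]; rfl)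
      (mt (QuotientGroup.eq_one_iff a).1 haH)
  rw [← QuotientGroup.eq_one_iff, zmodPowersHom, MonoidHom.coe_mk, OneHom.coe_mk,
    QuotientGroup.mk_pow, ← orderOf_dvd_iff_pow_eq_one, horder,
    ← ZMod.natCast_eq_zero_iff, ZMod.natCast_zmod_val]
  rfl

end

open scoped IsMulCommutative

def conjNormalEnd (p : ℕ) [H.Normal] [IsMulCommutative H] [Module (ZMod p) (Additive H)] :
    G →* Module.End (ZMod p) (Additive H) where
  toFun a := (MonoidHom.toAdditive (MulAut.conjNormal (H := H) a).toMonoidHom).toZModLinearMap p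
  map_one' := by ext; simp
  map_mul' a b := by ext; simp

theorem exists_isSimpleVirtualEndomorphism (p : ℕ) [Fact p.Prime] [H.Normal] [IsMulCommutative H]
    [Finite H] (hexp : ∀ h ∈ H, h ^ p = 1) {a : G} (haH : a ∉ H) (hap : a ^ p = 1) :
    ∃ φ : H →* G, IsSimpleVirtualEndomorphism φ := by
  have : Module (ZMod p) (Additive H) :=
    AddCommGroup.zmodModule fun x => Subtype.ext (hexp _ (Additive.toMul x).2)
  have hA : IsNilpotent (conjNormalEnd (H := H) p a - 1) :=
    isNilpotent_sub_one_of_pow_char_eq_one p (by rw [← map_pow, hap, map_one])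
  obtain ⟨σ, ℓ, hfix, hsep⟩ := exists_end_dual_of_isNilpotent_sub_one p hA
  set s : H →* H := MonoidHom.toAdditive.symm σ.toAddMonoidHom
  set τ : H →* G := (zmodPowersHom hap).comp (AddMonoidHom.toMultiplicative ℓ.toAddMonoidHom)
  have hτ (x : H) : τ x ∈ H ↔ ℓ (.ofMul x) = 0 := zmodPowersHom_mem_iff haH hap _
  have hcomm (x : H) : Commute a (s x) := by
    have := congr_arg (fun v => ((Additive.toMul v : H) : G)) (hfix (.ofMul x))
    simp only [conjNormalEnd] at this
    exact mul_inv_eq_iff_eq_mul.1 this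
  refine ⟨_, isSimpleVirtualEndomorphism_noncommCoprod s τ
    (fun x _ => (hcomm x).symm.pow_right _)
    (fun x hx => show zmodPowersHom hap (.ofAdd (ℓ (.ofMul x))) = 1 by
      rw [(hτ x).1 hx, ofAdd_zero, map_one]) fun N hN hle hN0 hs => ?_⟩
  let Q := AddSubgroup.toZModSubmodule p (N.subgroupOf H).toAddSubgroup
  have hQ : Q ≠ ⊥ := by
    obtain ⟨x, hxN, hx1⟩ := N.bot_or_exists_ne_one.resolve_left hN0
    exact (Submodule.ne_bot_iff Q).2 ⟨.ofMul ⟨x, hle hxN⟩, hxN, fun h => hx1 congr(($h).1)⟩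
  obtain ⟨v, hvQ, hv⟩ := hsep Q hQ (fun v hv => hN.conj_mem _ hv a) fun v hv => hs _ hv
  exact ⟨v.toMul, hvQ, fun h => hv ((hτ _).1 (h ▸ H.one_mem))⟩

end

theorem split_elementary_abelian_implies_simple_virtual_endomorphism_general
    (p : ℕ) (hp : p.Prime) (G : Type*) [Group G]
    (H : Subgroup G) [H.Normal]
    [Finite H]
    (hab : ∀ a b : G, a ∈ H → b ∈ H → a * b = b * a)
    (hexp : ∀ h ∈ H, h ^ p = 1)
    (hsplit : ∃ a : G, a ∉ H ∧ a ^ p = 1) :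
    ∃ φ : H →* G, ∀ N : Subgroup G, N.Normal → ∀ hle : N ≤ H,
        (∀ x, ∀ hx : x ∈ N, φ ⟨x, hle hx⟩ ∈ N) → N = ⊥ := by
  have : Fact p.Prime := ⟨hp⟩
  have : IsMulCommutative H := ⟨⟨fun x y => Subtype.ext (hab x y x.2 y.2)⟩⟩
  obtain ⟨a, haH, hap⟩ := hsplit
  exact exists_isSimpleVirtualEndomorphism p hexp haH hap

/-- **Backward direction of the main theorem.**
If `G` has a normal subgroup `H` of index `p` which is a finite, nontrivial,
elementary abelian `p`-group, and there exists `a ∈ G \ H` with `a ^ p = 1`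
(the extension splits), then there exists a simple virtual endomorphism
`φ : H → G`. -/
theorem split_elementary_abelian_implies_simple_virtual_endomorphism
    (p : ℕ) (hp : p.Prime) (G : Type*) [Group G]
    (H : Subgroup G) [H.Normal] (hidx : H.index = p)
    [Finite H] (hne : H ≠ ⊥)
    (hab : ∀ a b : G, a ∈ H → b ∈ H → a * b = b * a)
    (hexp : ∀ h ∈ H, h ^ p = 1)
    (hsplit : ∃ a : G, a ∉ H ∧ a ^ p = 1) :
    ∃ φ : H →* G, ∀ N : Subgroup G, N.Normal → ∀ hle : N ≤ H,
        (∀ x, ∀ hx : x ∈ N, φ ⟨x, hle hx⟩ ∈ N) → N = ⊥ :=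
  split_elementary_abelian_implies_simple_virtual_endomorphism_general p hp G H hab hexp hsplit
end

section
/- Let p be a prime, G a finite non-abelian p-group, H a subgroup of G of index p, and φ : H → G a simple, non-injective virtual endomorphism with kernel K. Then for every t ∈ G \ H and every i with 0 ≤ i ≤ p−1, the conjugate t^{-i} K t^{i} is a normal subgroup of H, and the intersection K ∩ t^{-1}Kt ∩ ⋯ ∩ t^{-(p-1)}Kt^{p-1} is the trivial subgroup. -/
/-- **Proposition (ii).**
Let `G` be a finite non-abelian `p`-group, `H` a subgroup of index `p`, and
`φ : H → G` a simple, non-injective virtual endomorphism with kernel `K`.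
Then for every `t ∈ G \ H` and every `0 ≤ i ≤ p - 1`, the conjugate
`t⁻ⁱ K tⁱ` is a normal subgroup of `H`, and
`K ∩ t⁻¹Kt ∩ ⋯ ∩ t⁻⁽ᵖ⁻¹⁾Ktᵖ⁻¹ = 1`. -/
theorem kernel_conjugates_normal_in_H_and_trivial_intersection
    (p : ℕ) (hp : p.Prime) (G : Type*) [Group G] [Finite G]
    (hpG : IsPGroup p G) (hnonab : ∃ a b : G, a * b ≠ b * a)
    (H : Subgroup G) (hidx : H.index = p)
    (φ : H →* G)
    (hsimple : ∀ N : Subgroup G, N.Normal → ∀ hle : N ≤ H,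
        (∀ x, ∀ hx : x ∈ N, φ ⟨x, hle hx⟩ ∈ N) → N = ⊥)
    (hninj : ¬ Function.Injective φ) :
    ∀ t : G, t ∉ H →
      (∀ i ≤ p - 1,
        (φ.ker.map H.subtype).map (MulAut.conj ((t ^ i)⁻¹)).toMonoidHom ≤ H ∧
        ∀ h ∈ H, ∀ x ∈ (φ.ker.map H.subtype).map (MulAut.conj ((t ^ i)⁻¹)).toMonoidHom,
          h * x * h⁻¹ ∈ (φ.ker.map H.subtype).map (MulAut.conj ((t ^ i)⁻¹)).toMonoidHom) ∧
      (⨅ i ∈ Finset.range p,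
        (φ.ker.map H.subtype).map (MulAut.conj ((t ^ i)⁻¹)).toMonoidHom) = ⊥ := by
  haveI : Fact p.Prime := ⟨hp⟩
  intro t ht
  set K : Subgroup G := φ.ker.map H.subtype with hKdef
  -- K ≤ H
  have hKH : K ≤ H := by
    rintro x ⟨k, hk, rfl⟩
    exact k.2
  -- K is normal in H
  have hKnorm : ∀ h ∈ H, ∀ k ∈ K, h * k * h⁻¹ ∈ K := by
    rintro h hh k ⟨k0, hk0, rfl⟩
    exact ⟨⟨h, hh⟩ * k0 * ⟨h, hh⟩⁻¹,
      (MonoidHom.normal_ker φ).conj_mem k0 hk0 ⟨h, hh⟩, rfl⟩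
  -- H is normal (maximal subgroup of a nilpotent group)
  have hHmax : IsCoatom H := by
    constructor
    · intro hH
      rw [hH, Subgroup.index_top] at hidx
      exact hp.ne_one hidx.symm
    · intro M hM
      have hle : H ≤ M := le_of_lt hM
      have hdvd : M.index ∣ p := hidx ▸ Subgroup.index_dvd_of_le hle
      rcases (Nat.Prime.eq_one_or_self_of_dvd hp _ hdvd) with h1 | h1
      · exact Subgroup.index_eq_one.mp h1
      · exfalso
        have := Subgroup.relIndex_mul_index hle
        rw [h1, hidx] at this
        have hrel : H.relIndex M = 1 :=
          Nat.eq_of_mul_eq_mul_right hp.pos (by rw [this, one_mul])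
        exact hM.ne ((le_antisymm hle (Subgroup.relIndex_eq_one.mp hrel))) 
  haveI : Group.IsNilpotent G := hpG.isNilpotent
  haveI hHn : H.Normal :=
    Subgroup.NormalizerCondition.normal_of_coatom H (normalizerCondition_of_isNilpotent) hHmax
  -- membership in conjugates
  have hmem : ∀ (i : ℕ) (x : G),
      x ∈ K.map (MulAut.conj ((t ^ i)⁻¹)).toMonoidHom ↔ t ^ i * x * (t ^ i)⁻¹ ∈ K := by
    intro i x
    rw [Subgroup.mem_map_equiv, MulAut.conj_symm_apply]
    simp
  -- t ^ p ∈ H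
  have htp : t ^ p ∈ H := by
    have : ((t : G ⧸ H) ^ p : G ⧸ H) = 1 := by
      have hcard : Nat.card (G ⧸ H) = p := by rw [← Subgroup.index_eq_card, hidx]
      rw [← hcard]
      exact pow_card_eq_one'
    rwa [← QuotientGroup.mk_pow, QuotientGroup.eq_one_iff] at this
  -- general conjugation fact: for all n, x ∈ N → tⁿ x t⁻ⁿ ∈ K
  -- first part
  refine ⟨?_, ?_⟩
  · intro i _
    constructor
    · intro x hx
      rw [hmem] at hx
      have := hKH hx
      have h2 := hHn.conj_mem _ this ((t ^ i)⁻¹)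
      simpa [mul_assoc] using h2
    · intro h hh x hx
      rw [hmem] at hx ⊢
      have hth : t ^ i * h * (t ^ i)⁻¹ ∈ H := hHn.conj_mem _ hh _
      have := hKnorm _ hth _ hx
      convert this using 1
      group
  -- second part
  · set N := ⨅ i ∈ Finset.range p, K.map (MulAut.conj ((t ^ i)⁻¹)).toMonoidHom with hNdef
    have hNmem : ∀ x : G, x ∈ N ↔ ∀ i < p, t ^ i * x * (t ^ i)⁻¹ ∈ K := by
      intro x
      simp only [hNdef, Subgroup.mem_iInf, Finset.mem_range, hmem]
    -- in fact for every natural n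
    have hNmem' : ∀ x ∈ N, ∀ n : ℕ, t ^ n * x * (t ^ n)⁻¹ ∈ K := by
      intro x hx n
      have hr : n % p < p := Nat.mod_lt _ hp.pos
      have hxr : t ^ (n % p) * x * (t ^ (n % p))⁻¹ ∈ K := (hNmem x).mp hx _ hr
      have hdecomp : t ^ n = (t ^ p) ^ (n / p) * t ^ (n % p) := by
        rw [← pow_mul, ← pow_add, Nat.div_add_mod]
      rw [hdecomp]
      have hs : (t ^ p) ^ (n / p) ∈ H := H.pow_mem htp _
      have key : (t ^ p) ^ (n / p) * t ^ (n % p) * x * ((t ^ p) ^ (n / p) * t ^ (n % p))⁻¹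
          = (t ^ p) ^ (n / p) * (t ^ (n % p) * x * (t ^ (n % p))⁻¹) * ((t ^ p) ^ (n / p))⁻¹ := by
        group
      rw [key]
      exact hKnorm _ hs _ hxr
    have hNle : N ≤ H := by
      intro x hx
      have := (hNmem x).mp hx 0 hp.pos
      simpa using hKH this
    have hNnormal : N.Normal := by
      constructor
      intro x hx g
      -- decompose g = h * t ^ j
      obtain ⟨j, hj⟩ : ∃ j : ℕ, (t : G ⧸ H) ^ j = (g : G ⧸ H) := by
        have hcard : Nat.card (G ⧸ H) = p := by rw [← Subgroup.index_eq_card, hidx]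
        have ht1 : (t : G ⧸ H) ≠ 1 := by
          rw [Ne, QuotientGroup.eq_one_iff]; exact ht
        have horder : orderOf (t : G ⧸ H) = p := by
          have := orderOf_dvd_natCard (t : G ⧸ H)
          rw [hcard] at this
          rcases (Nat.Prime.eq_one_or_self_of_dvd hp _ this) with h1 | h1
          · exact absurd (orderOf_eq_one_iff.mp h1) ht1
          · exact h1
        have : Subgroup.zpowers (t : G ⧸ H) = ⊤ := by
          apply Subgroup.eq_top_of_card_eq
          rw [Nat.card_zpowers, horder, hcard]
        have hg : (g : G ⧸ H) ∈ Subgroup.zpowers (t : G ⧸ H) := this ▸ Subgroup.mem_top _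
        rwa [← mem_powers_iff_mem_zpowers, Submonoid.mem_powers_iff] at hg
      have hh : g * (t ^ j)⁻¹ ∈ H := by
        rw [← QuotientGroup.eq_one_iff, QuotientGroup.mk_mul, QuotientGroup.mk_inv,
          QuotientGroup.mk_pow, hj, mul_inv_cancel]
      set h := g * (t ^ j)⁻¹ with hhd
      have hg : g = h * t ^ j := by rw [hhd]; group
      rw [hNmem]
      intro i hi
      have key : t ^ i * (g * x * g⁻¹) * (t ^ i)⁻¹
          = (t ^ i * h * (t ^ i)⁻¹) * (t ^ (i + j) * x * (t ^ (i + j))⁻¹)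
            * (t ^ i * h * (t ^ i)⁻¹)⁻¹ := by
        rw [hg, pow_add]; group
      rw [key]
      exact hKnorm _ (hHn.conj_mem _ hh _) _ (hNmem' x hx (i + j))
    have hNinv : ∀ x, ∀ hx : x ∈ N, φ ⟨x, hNle hx⟩ ∈ N := by
      intro x hx
      have hxK : x ∈ K := by simpa using (hNmem x).mp hx 0 hp.pos
      obtain ⟨k, hk, hkx⟩ := hxK
      have : (⟨x, hNle hx⟩ : H) = k := by
        ext; exact hkx.symm
      rw [this, hk]
      exact N.one_mem
    exact hsimple N hNnormal hNle hNinv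
end

section
/- Let p be a prime, G a finite non-abelian p-group, H a subgroup of G of index p, and φ : H → G a simple, non-injective virtual endomorphism. Then H is a nontrivial subdirect product: there exist p nontrivial normal subgroups N_0, …, N_{p−1} of H whose intersection is the trivial subgroup. -/
/-- **Proposition (iii).**
Let `G` be a finite non-abelian `p`-group, `H` a subgroup of index `p`, and
`φ : H → G` a simple, non-injective virtual endomorphism.  Then `H` is a
nontrivial subdirect product: there exist `p` nontrivial normal subgroups of
`H` with trivial intersection. -/
theorem domain_is_nontrivial_subdirect_product
    (p : ℕ) (hp : p.Prime) (G : Type*) [Group G] [Finite G]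
    (hpG : IsPGroup p G) (hnonab : ∃ a b : G, a * b ≠ b * a)
    (H : Subgroup G) (hidx : H.index = p)
    (φ : H →* G)
    (hsimple : ∀ N : Subgroup G, N.Normal → ∀ hle : N ≤ H,
        (∀ x, ∀ hx : x ∈ N, φ ⟨x, hle hx⟩ ∈ N) → N = ⊥)
    (hninj : ¬ Function.Injective φ) :
    ∃ N : Fin p → Subgroup H,
      (∀ i, N i ≠ ⊥) ∧ (∀ i, (N i).Normal) ∧ (⨅ i, N i) = ⊥ := by
  haveI : Fact p.Prime := ⟨hp⟩
  -- `H` is a coatom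
  have hcoatom : IsCoatom H := by
    constructor
    · intro h
      rw [h, Subgroup.index_top] at hidx
      exact hp.one_lt.ne (by omega)
    · intro K hK
      have hle : H ≤ K := hK.le
      have hrel := Subgroup.relIndex_mul_index hle
      rw [hidx] at hrel
      have hdvd : K.index ∣ p := Dvd.intro_left _ hrel
      rcases (Nat.Prime.eq_one_or_self_of_dvd hp _ hdvd) with h1 | h1
      · exact Subgroup.index_eq_one.mp h1
      · exfalso
        rw [h1] at hrel
        have : H.relIndex K = 1 :=
          Nat.eq_of_mul_eq_mul_right hp.pos (by rw [hrel, one_mul])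
        exact hK.ne' (le_antisymm (Subgroup.relIndex_eq_one.mp this) hle)
  haveI hHN : H.Normal := by
    haveI := hpG.isNilpotent
    have hnc : NormalizerCondition G := normalizerCondition_of_isNilpotent
    exact Subgroup.NormalizerCondition.normal_of_coatom H hnc hcoatom
  -- the kernel
  set K : Subgroup H := φ.ker with hKdef
  have hKbot : K ≠ ⊥ := fun h => hninj ((φ.ker_eq_bot_iff).mp h)
  have hKnormal : K.Normal := φ.normal_ker
  set K' : Subgroup G := K.map H.subtype with hK'def
  have hKconj : ∀ h ∈ H, ∀ y ∈ K', h * y * h⁻¹ ∈ K' := by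
    intro h hh y hy
    rcases hy with ⟨k, hk, rfl⟩
    refine ⟨(⟨h, hh⟩ : H) * k * (⟨h, hh⟩ : H)⁻¹, hKnormal.conj_mem k hk _, rfl⟩
  -- coset representatives
  have e : G ⧸ H ≃ Fin p :=
    Finite.equivFinOfCardEq (by rw [← hidx]; rfl)
  let s : G ⧸ H → G := Quotient.out
  have hs : ∀ c : G ⧸ H, (QuotientGroup.mk (s c) : G ⧸ H) = c := fun c => Quotient.out_eq c
  -- the conjugate subgroups
  refine ⟨fun i => K.map (MulAut.conjNormal (s (e.symm i))).toMonoidHom, ?_, ?_, ?_⟩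
  · intro i h
    apply hKbot
    exact (Subgroup.map_eq_bot_iff_of_injective _
      (MulAut.conjNormal (s (e.symm i))).injective).mp h
  · intro i
    exact hKnormal.map _ (MulAut.conjNormal (s (e.symm i))).surjective
  · -- trivial intersection
    set M : Subgroup G :=
      (⨅ i, K.map (MulAut.conjNormal (s (e.symm i))).toMonoidHom).map H.subtype with hMdef
    -- membership characterization
    have memN : ∀ (g : G) (x : H),
        x ∈ K.map (MulAut.conjNormal g).toMonoidHom ↔ g⁻¹ * (x : G) * g ∈ K' := by
      intro g x
      rw [Subgroup.mem_map]
      simp only [MulEquiv.coe_toMonoidHom]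
      constructor
      · rintro ⟨k, hk, rfl⟩
        have h2 : g⁻¹ * ((MulAut.conjNormal g) k : G) * g = (k : G) := by
          rw [MulAut.conjNormal_apply]; group
        rw [h2]
        exact ⟨k, hk, rfl⟩
      · rintro ⟨k, hk, hkeq⟩
        refine ⟨k, hk, Subtype.ext ?_⟩
        rw [MulAut.conjNormal_apply]
        have h3 : (k : G) = g⁻¹ * (x : G) * g := hkeq
        rw [h3]; group
    have stepA : ∀ y ∈ M, ∀ g : G, g⁻¹ * y * g ∈ K' := by
      rintro y hy g
      rcases hy with ⟨x, hx, rfl⟩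
      simp only [SetLike.mem_coe, Subgroup.mem_iInf] at hx
      set c : G ⧸ H := QuotientGroup.mk g with hc
      have hxc : (s c)⁻¹ * (x : G) * (s c) ∈ K' := by
        have := hx (e c)
        rw [memN] at this
        rwa [Equiv.symm_apply_apply] at this
      have hmem : (s c)⁻¹ * g ∈ H := by
        have : (QuotientGroup.mk (s c) : G ⧸ H) = QuotientGroup.mk g := by rw [hs]
        exact (QuotientGroup.eq).mp this
      have key := hKconj _ (H.inv_mem hmem) _ hxc
      have : ((s c)⁻¹ * g)⁻¹ * ((s c)⁻¹ * (x : G) * (s c)) * ((s c)⁻¹ * g)⁻¹⁻¹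
          = g⁻¹ * (x : G) * g := by group
      rwa [this] at key
    have hMle : M ≤ H := Subgroup.map_subtype_le _
    have hMnormal : M.Normal := by
      constructor
      intro y hy a
      have hyH : y ∈ H := hMle hy
      have haya : a * y * a⁻¹ ∈ H := hHN.conj_mem y hyH a
      refine ⟨⟨a * y * a⁻¹, haya⟩, ?_, rfl⟩
      rw [SetLike.mem_coe, Subgroup.mem_iInf]
      intro i
      rw [memN]
      have := stepA y hy (a⁻¹ * s (e.symm i))
      have heq : (a⁻¹ * s (e.symm i))⁻¹ * y * (a⁻¹ * s (e.symm i))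
          = (s (e.symm i))⁻¹ * (a * y * a⁻¹) * (s (e.symm i)) := by group
      rwa [heq] at this
    have hMinv : ∀ x, ∀ hx : x ∈ M, φ ⟨x, hMle hx⟩ ∈ M := by
      intro x hx
      have h1 : x ∈ K' := by
        have := stepA x hx 1
        simpa using this
      rcases h1 with ⟨k, hk, hkeq⟩
      have : (⟨x, hMle hx⟩ : H) = k := Subtype.ext hkeq.symm
      rw [this]
      rw [SetLike.mem_coe, hKdef, MonoidHom.mem_ker] at hk
      rw [hk]
      exact M.one_mem
    have hMbot : M = ⊥ := hsimple M hMnormal hMle hMinv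
    rw [hMdef] at hMbot
    rw [Subgroup.eq_bot_iff_forall]
    intro x hx
    have : (x : G) ∈ ((⨅ i, K.map (MulAut.conjNormal (s (e.symm i))).toMonoidHom).map
        H.subtype : Subgroup G) := ⟨x, hx, rfl⟩
    rw [hMbot] at this
    exact Subtype.ext (by simpa using this)
end

section
/- (Splitting Lemma) Let p be a prime and let G be a group with a normal subgroup H of index p. Suppose φ : H → G is a simple virtual endomorphism and H contains an element of order p. Then there exists h ∈ H of order p such that φ(h) ∉ H and φ(h) has order p; in particular, G \ H contains an element of order p, so the short exact sequence 1 → H → G → C_p → 1 splits. -/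
/-!
If no element of order `p` of `H` is mapped out of `H`, then the subgroup generated by the
elements `x ∈ H` with `x ^ p = 1` is normal (the generating set is conjugation invariant),
lies in `H` and is `φ`-invariant, so simplicity forces it to be trivial, contradicting the
existence of an element of order `p` in `H`. The image of an element of order `p` outside `H`
is nontrivial with `p`-th power `1`, hence has order `p`.
-/

section

open Subgroup Group

variable {G : Type*} [Group G]

theorem Subgroup.closure_normal_of_conj_mem {s : Set G}
    (hs : ∀ g x, x ∈ s → g * x * g⁻¹ ∈ s) : (closure s).Normal := by
  have hconj : conjugatesOfSet s ⊆ s := fun x hx => by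
    obtain ⟨a, ha, hax⟩ := mem_conjugatesOfSet_iff.1 hx
    obtain ⟨c, rfl⟩ := isConj_iff.1 hax
    exact hs c a ha
  have heq : normalClosure s = closure s :=
    le_antisymm (closure_mono hconj) closure_le_normalClosure
  exact heq ▸ normalClosure_normal

theorem Subgroup.map_mem_closure_of_map_mem {H : Subgroup G} (φ : H →* G) {s : Set G}
    (hsH : s ⊆ H) (hs : ∀ x, ∀ hx : x ∈ s, φ ⟨x, hsH hx⟩ ∈ s) :
    ∀ x, ∀ hx : x ∈ closure s, φ ⟨x, (closure_le H).2 hsH hx⟩ ∈ closure s := by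
  have hle : closure s ≤ ((closure s).comap φ).map H.subtype :=
    (closure_le _).2 fun x hx => ⟨⟨x, hsH hx⟩, subset_closure (hs x hx), rfl⟩
  intro x hx
  obtain ⟨y, hy, rfl⟩ := hle hx
  exact hy

theorem exists_orderOf_eq_prime_map_notMem {p : ℕ} (hp : p.Prime) {H : Subgroup G} [H.Normal]
    (φ : H →* G)
    (hsimple : ∀ N : Subgroup G, N.Normal → ∀ hle : N ≤ H,
        (∀ x, ∀ hx : x ∈ N, φ ⟨x, hle hx⟩ ∈ N) → N = ⊥)
    (hord : ∃ h : H, orderOf h = p) :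
    ∃ h : H, orderOf h = p ∧ φ h ∉ H := by
  have := Fact.mk hp
  by_contra! hφH
  set s : Set G := {x | x ∈ H ∧ x ^ p = 1}
  have hsH : s ⊆ H := fun x hx => hx.1
  have hs_conj : ∀ g x, x ∈ s → g * x * g⁻¹ ∈ s := fun g x ⟨hxH, hx⟩ =>
    ⟨Normal.conj_mem ‹_› x hxH g, by rw [conj_pow, hx, mul_one, mul_inv_cancel]⟩
  have hφs : ∀ x, ∀ hx : x ∈ s, φ ⟨x, hsH hx⟩ ∈ s := by
    rintro x ⟨hxH, hx⟩
    have hpow : (⟨x, hxH⟩ : H) ^ p = 1 := Subtype.ext hx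
    refine ⟨?_, by rw [← map_pow, hpow, map_one]⟩
    by_cases hx1 : (⟨x, hxH⟩ : H) = 1
    · rw [hx1, map_one]
      exact H.one_mem
    · exact hφH _ (orderOf_eq_prime hpow hx1)
  have hbot : closure s = ⊥ :=
    hsimple _ (closure_normal_of_conj_mem hs_conj) _ (map_mem_closure_of_map_mem φ hsH hφs)
  obtain ⟨h, hh⟩ := hord
  obtain ⟨hpow, hne⟩ := orderOf_eq_prime_iff.1 hh
  have hmem : (h : G) ∈ closure s := subset_closure ⟨h.2, congrArg Subtype.val hpow⟩
  rw [hbot, mem_bot] at hmem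
  exact hne (Subtype.ext hmem)

end

theorem splitting_lemma_general
    (p : ℕ) (hp : p.Prime) (G : Type*) [Group G]
    (H : Subgroup G) [H.Normal]
    (φ : H →* G)
    (hsimple : ∀ N : Subgroup G, N.Normal → ∀ hle : N ≤ H,
        (∀ x, ∀ hx : x ∈ N, φ ⟨x, hle hx⟩ ∈ N) → N = ⊥)
    (hord : ∃ h : H, orderOf h = p) :
    (∃ h : H, orderOf h = p ∧ (φ h ∉ H) ∧ orderOf (φ h) = p) ∧
      ∃ a : G, a ∉ H ∧ orderOf a = p := by
  have := Fact.mk hp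
  obtain ⟨h, hh, hφh⟩ := exists_orderOf_eq_prime_map_notMem hp φ hsimple hord
  have hφp : orderOf (φ h) = p :=
    orderOf_eq_prime (by rw [← map_pow, ← hh, pow_orderOf_eq_one, map_one])
      fun h1 => hφh (h1 ▸ H.one_mem)
  exact ⟨⟨h, hh, hφh, hφp⟩, φ h, hφh, hφp⟩

/-- **Splitting Lemma.**
Let `G` be a group with a normal subgroup `H` of index `p`, where `p` is
prime.  If `φ : H → G` is a simple virtual endomorphism and `H` contains an
element of order `p`, then there is `h ∈ H` of order `p` with `φ h ∉ H` and
`φ h` of order `p`; in particular `G \ H` contains an element of order `p`,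
so the extension `1 → H → G → C_p → 1` splits. -/
theorem splitting_lemma
    (p : ℕ) (hp : p.Prime) (G : Type*) [Group G]
    (H : Subgroup G) [H.Normal] (hidx : H.index = p)
    (φ : H →* G)
    (hsimple : ∀ N : Subgroup G, N.Normal → ∀ hle : N ≤ H,
        (∀ x, ∀ hx : x ∈ N, φ ⟨x, hle hx⟩ ∈ N) → N = ⊥)
    (hord : ∃ h : H, orderOf h = p) :
    (∃ h : H, orderOf h = p ∧ (φ h ∉ H) ∧ orderOf (φ h) = p) ∧
      ∃ a : G, a ∉ H ∧ orderOf a = p :=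
  splitting_lemma_general p hp G H φ hsimple hord
end

section
/- Let p be a prime and m ≥ 1, and let G be the elementary abelian p-group C_p^m (for instance, the additive group of functions Fin m → ZMod p). Then there exist a subgroup H of G of index p and an injective group homomorphism φ : H → G such that the only φ-invariant (normal) subgroup of G contained in H is the trivial subgroup; that is, G admits an injective, simple virtual endomorphism of index p. -/
/-!
Take `H` to be the functions vanishing at the first coordinate and `φ` the left shift
`(f₀, f₁, …, fₙ) ↦ (f₁, …, fₙ, 0)`. A function in `H` is recovered from its shift, so `φ` is
injective on `H`. If `N ≤ H` is `φ`-invariant and `f ∈ N`, then every iterated shift of `f` lies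
in `N ≤ H`; the `k`-th one has first coordinate `f k`, so `f = 0`.
-/

section ShiftLeft

variable {A : Type*} [AddZeroClass A]

def shiftLeft (n : ℕ) : (Fin (n + 1) → A) →+ (Fin (n + 1) → A) where
  toFun f := Fin.snoc (Fin.tail f) 0
  map_zero' := by
    ext i
    induction i using Fin.lastCases <;> simp [Fin.tail]
  map_add' f g := by
    ext i
    induction i using Fin.lastCases <;> simp [Fin.tail]

variable {n : ℕ}

@[simp]
theorem shiftLeft_apply_castSucc (f : Fin (n + 1) → A) (i : Fin n) :
    shiftLeft n f i.castSucc = f i.succ :=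
  Fin.snoc_castSucc (α := fun _ => A) _ _ _

theorem eq_zero_of_apply_zero_of_shiftLeft_eq_zero {f : Fin (n + 1) → A} (h₀ : f 0 = 0)
    (hshift : shiftLeft n f = 0) : f = 0 := by
  funext i
  induction i using Fin.cases with
  | zero => exact h₀
  | succ i => simpa using congrFun hshift i.castSucc

end ShiftLeft

theorem AddSubgroup.index_ker_evalAddMonoidHom {ι A : Type*} [AddGroup A] (i : ι) :
    (Pi.evalAddMonoidHom (fun _ : ι => A) i).ker.index = Nat.card A := by
  rw [AddSubgroup.index_ker, AddMonoidHom.range_eq_top.mpr (Function.surjective_eval i),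
    AddSubgroup.card_top]

variable {A : Type*} [AddGroup A] {n : ℕ}

theorem shiftLeft_injective_on_ker_eval_zero :
    Function.Injective
      ((shiftLeft n).comp (Pi.evalAddMonoidHom (fun _ : Fin (n + 1) => A) 0).ker.subtype) :=
  (injective_iff_map_eq_zero _).mpr fun f hf =>
    Subtype.ext (eq_zero_of_apply_zero_of_shiftLeft_eq_zero f.2 hf)

theorem AddSubgroup.eq_bot_of_shiftLeft_invariant {N : AddSubgroup (Fin (n + 1) → A)}
    (h₀ : ∀ f ∈ N, f 0 = 0) (hshift : ∀ f ∈ N, shiftLeft n f ∈ N) : N = ⊥ := by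
  have hvanish : ∀ i, ∀ f ∈ N, f i = 0 := by
    intro i
    induction i using Fin.induction with
    | zero => exact h₀
    | succ i ih => exact fun f hf => by simpa using ih (shiftLeft n f) (hshift f hf)
  exact (AddSubgroup.eq_bot_iff_forall N).mpr fun f hf => funext fun i => hvanish i f hf

theorem elementary_abelian_injective_simple_virtual_endomorphism_general
    (p : ℕ) (m : ℕ) (hm : 1 ≤ m) :
    ∃ H : AddSubgroup (Fin m → ZMod p), H.index = p ∧
      ∃ φ : H →+ (Fin m → ZMod p), Function.Injective φ ∧
        ∀ N : AddSubgroup (Fin m → ZMod p), ∀ hle : N ≤ H,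
          (∀ x, ∀ hx : x ∈ N, φ ⟨x, hle hx⟩ ∈ N) → N = ⊥ := by
  obtain ⟨n, rfl⟩ := Nat.exists_eq_add_of_le' hm
  refine ⟨_, by rw [AddSubgroup.index_ker_evalAddMonoidHom, Nat.card_zmod], _,
    shiftLeft_injective_on_ker_eval_zero, fun N hle hinv =>
    AddSubgroup.eq_bot_of_shiftLeft_invariant (fun f hf => hle hf) (fun f hf => hinv f hf)⟩

/-- **Example.**
The elementary abelian `p`-group `C_p^m` (the additive group
`Fin m → ZMod p`, `m ≥ 1`) admits an injective, simple virtual endomorphism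
of index `p`: there are an (additive) subgroup `H` of index `p` and an
injective homomorphism `φ : H → C_p^m` whose only `φ`-invariant subgroup
contained in `H` is trivial. -/
theorem elementary_abelian_injective_simple_virtual_endomorphism
    (p : ℕ) (hp : p.Prime) (m : ℕ) (hm : 1 ≤ m) :
    ∃ H : AddSubgroup (Fin m → ZMod p), H.index = p ∧
      ∃ φ : H →+ (Fin m → ZMod p), Function.Injective φ ∧
        ∀ N : AddSubgroup (Fin m → ZMod p), ∀ hle : N ≤ H,
          (∀ x, ∀ hx : x ∈ N, φ ⟨x, hle hx⟩ ∈ N) → N = ⊥ :=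
  elementary_abelian_injective_simple_virtual_endomorphism_general p m hm
end

section
/- Let n ≥ 3 and let G be the dihedral group of order 2^{n+1} (Mathlib's DihedralGroup (2^n)). Then G admits no simple virtual endomorphism of index 2: for every subgroup H of G of index 2 and every group homomorphism φ : H → G, there exists a nontrivial normal subgroup N of G contained in H with φ(x) ∈ N for all x ∈ N. -/
/-!
The central involution `z = r^(m/2)` of the dihedral group of order `2m` generates the required
subgroup whenever `8 ∣ m`. Then `z = v⁴` with `v = r^(m/8)`; an index-`2` subgroup `H` contains
every square, so `u = v²` and `z = u²` lie in `H`. Hence `φ z = (φ u)²` with `(φ u)⁴ = φ (v⁸) = 1`,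
and in a dihedral group the square of an element of order dividing `4` is `1` or `z`.
-/

namespace ZMod

theorem eq_zero_or_eq_half_of_add_self_eq_zero {n : ℕ} [NeZero n] (hn : 2 ∣ n) {j : ZMod n}
    (h : j + j = 0) : j = 0 ∨ j = ((n / 2 : ℕ) : ZMod n) := by
  obtain ⟨c, hc⟩ : n ∣ j.val + j.val := by
    rw [← ZMod.natCast_eq_zero_iff, Nat.cast_add, ZMod.natCast_zmod_val, h]
  have hlt := j.val_lt
  have hc2 : c < 2 := Nat.lt_of_mul_lt_mul_left (a := n) (by omega)
  interval_cases c
  · left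
    rw [← ZMod.val_eq_zero]
    omega
  · right
    rw [← ZMod.natCast_zmod_val j]
    congr 1
    omega

end ZMod

namespace DihedralGroup

variable {n : ℕ}

theorem r_mem_center {i : ZMod n} (hi : i + i = 0) : r i ∈ Subgroup.center (DihedralGroup n) := by
  refine Subgroup.mem_center_iff.mpr fun g => ?_
  cases g with
  | r j => rw [r_mul_r, r_mul_r, add_comm]
  | sr j =>
    rw [sr_mul_r, r_mul_sr, sub_eq_add_neg, neg_eq_of_add_eq_zero_left hi]

theorem sq_eq_one_or_eq_r_half_of_pow_four_eq_one [NeZero n] (hn : 2 ∣ n) {w : DihedralGroup n}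
    (hw : w ^ 4 = 1) : w ^ 2 = 1 ∨ w ^ 2 = r (n / 2 : ℕ) := by
  cases w with
  | r i =>
    rw [r_pow, one_def, r.injEq] at hw
    rw [r_pow, one_def]
    refine (ZMod.eq_zero_or_eq_half_of_add_self_eq_zero hn (j := i * (2 : ℕ)) ?_).imp
      (congrArg r) (congrArg r)
    rw [← hw]
    push_cast
    ring
  | sr i => exact Or.inl (by rw [sq, sr_mul_self])

end DihedralGroup

namespace Subgroup

variable {G : Type*} [Group G] {H : Subgroup G}

def IsInvariantUnder (N : Subgroup G) (φ : H →* G) : Prop :=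
  ∃ hle : N ≤ H, ∀ x, ∀ hx : x ∈ N, φ ⟨x, hle hx⟩ ∈ N

theorem zpowers_normal_of_mem_center {g : G} (hg : g ∈ center G) : (zpowers g).Normal where
  conj_mem x hx y := by
    rw [mem_center_iff.mp (zpowers_le.mpr hg hx) y, mul_inv_cancel_right]
    exact hx

theorem isInvariantUnder_zpowers_pow_four (hH : H.index = 2) (φ : H →* G) {v : G}
    (hv : v ^ 8 = 1) (hsq : ∀ w : G, w ^ 4 = 1 → w ^ 2 ∈ zpowers (v ^ 4)) :
    IsInvariantUnder (zpowers (v ^ 4)) φ := by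
  have hz : v ^ 4 ∈ H := by
    rw [show v ^ 4 = (v ^ 2) ^ 2 by rw [← pow_mul]]
    exact sq_mem_of_index_two hH _
  set u : H := ⟨v ^ 2, sq_mem_of_index_two hH v⟩
  have hzu : (⟨v ^ 4, hz⟩ : H) = u ^ 2 := Subtype.ext (by simp [u, ← pow_mul])
  have hu : u ^ 4 = 1 := Subtype.ext (by simp [u, ← pow_mul, hv])
  have hφz : φ ⟨v ^ 4, hz⟩ ∈ zpowers (v ^ 4) := by
    rw [hzu, map_pow]
    exact hsq _ (by rw [← map_pow, hu, map_one])
  refine ⟨zpowers_le.mpr hz, fun x hx => ?_⟩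
  obtain ⟨k, rfl⟩ := mem_zpowers_iff.mp hx
  have hxk : (⟨(v ^ 4) ^ k, zpowers_le.mpr hz hx⟩ : H) = ⟨v ^ 4, hz⟩ ^ k := Subtype.ext (by simp)
  rw [hxk, map_zpow]
  exact zpow_mem hφz k

end Subgroup

namespace DihedralGroup

theorem exists_ne_bot_normal_isInvariantUnder {n : ℕ} [NeZero n] (hn : 8 ∣ n)
    {H : Subgroup (DihedralGroup n)} (hH : H.index = 2) (φ : H →* DihedralGroup n) :
    ∃ N : Subgroup (DihedralGroup n), N ≠ ⊥ ∧ N.Normal ∧ Subgroup.IsInvariantUnder N φ := by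
  set v : DihedralGroup n := r (n / 8 : ℕ)
  have hv4 : v ^ 4 = r (n / 2 : ℕ) := by
    rw [r_pow, ← Nat.cast_mul]
    congr 2
    omega
  have hv8 : v ^ 8 = 1 := by
    rw [r_pow, ← Nat.cast_mul, one_def, show n / 8 * 8 = n by omega, ZMod.natCast_self]
  have hhalf : (n / 2 : ℕ) + ((n / 2 : ℕ) : ZMod n) = 0 := by
    rw [← Nat.cast_add, show n / 2 + n / 2 = n by omega, ZMod.natCast_self]
  refine ⟨Subgroup.zpowers (v ^ 4), ?_, ?_, ?_⟩
  · rw [Ne, Subgroup.zpowers_eq_bot, hv4, one_def, r.injEq, ZMod.natCast_eq_zero_iff]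
    have hpos := NeZero.pos n
    exact Nat.not_dvd_of_pos_of_lt (by omega) (by omega)
  · exact Subgroup.zpowers_normal_of_mem_center (hv4 ▸ r_mem_center hhalf)
  · refine Subgroup.isInvariantUnder_zpowers_pow_four hH φ hv8 fun w hw => ?_
    rcases sq_eq_one_or_eq_r_half_of_pow_four_eq_one (dvd_trans (by norm_num) hn) hw with h | h
    · exact h ▸ one_mem _
    · exact h ▸ hv4 ▸ Subgroup.mem_zpowers _

end DihedralGroup

/-- **Example (dihedral groups).**
For `n ≥ 3`, the dihedral group `D_{2^n}` (of order `2^{n+1}`) admits no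
simple virtual endomorphism of index `2`: for every subgroup `H` of index `2`
and every homomorphism `φ : H → D_{2^n}`, there is a nontrivial normal
subgroup `N` of `D_{2^n}` contained in `H` that is `φ`-invariant. -/
theorem dihedral_no_simple_virtual_endomorphism
    (n : ℕ) (hn : 3 ≤ n)
    (H : Subgroup (DihedralGroup (2 ^ n))) (hidx : H.index = 2)
    (φ : H →* DihedralGroup (2 ^ n)) :
    ∃ N : Subgroup (DihedralGroup (2 ^ n)), N ≠ ⊥ ∧ N.Normal ∧
      ∃ hle : N ≤ H, ∀ x, ∀ hx : x ∈ N, φ ⟨x, hle hx⟩ ∈ N := by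
  have h8 : 8 ∣ 2 ^ n := by
    simpa using Nat.pow_dvd_pow 2 hn
  exact DihedralGroup.exists_ne_bot_normal_isInvariantUnder h8 hidx φ
end

section
/- Let n ≥ 3 and let G be the dihedral group of order 2^{n+1} (Mathlib's DihedralGroup (2^n)). Then every subgroup H of G of index 2 is subdirectly irreducible: for any two nontrivial normal subgroups N₁ and N₂ of H, the intersection N₁ ∩ N₂ is nontrivial. -/
/-!
Every nontrivial normal subgroup `N` of `H` contains the central involution `z = r (2 ^ (n - 1))`.
If `N` contains a rotation `r i ≠ 1`, a power of it is `z`, the unique involution of the cyclic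
group of rotations of order `2 ^ n`. If `N` contains a reflection `s`, then, since `H` contains
all squares and hence `r 2`, it also contains `(r 2 * s * (r 2)⁻¹) * s = r 4`, which is nontrivial
because `n ≥ 3`. Hence `z ∈ N₁ ⊓ N₂`.
-/

open DihedralGroup

namespace ZMod

theorem two_pow_ne_zero {k n : ℕ} (hkn : k < n) : (2 ^ k : ZMod (2 ^ n)) ≠ 0 := by
  have : ¬2 ^ n ∣ 2 ^ k := by rw [Nat.pow_dvd_pow_iff_le_right (by norm_num)]; omega
  exact_mod_cast mt (natCast_eq_zero_iff _ _).mp this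

theorem exists_mul_eq_two_pow_pred {n : ℕ} {i : ZMod (2 ^ n)} (hi : i ≠ 0) :
    ∃ c : ℕ, i * c = 2 ^ (n - 1) := by
  obtain ⟨k, w, ⟨t, rfl⟩, hkw⟩ := Nat.exists_eq_two_pow_mul_odd ((val_ne_zero i).mpr hi)
  have hkn : k < n := by
    refine (Nat.pow_lt_pow_iff_right (by norm_num)).mp (lt_of_le_of_lt ?_ i.val_lt)
    exact hkw ▸ Nat.le_mul_of_pos_right _ (by omega)
  obtain ⟨l, rfl⟩ := Nat.exists_eq_add_of_lt hkn
  refine ⟨2 ^ l, ?_⟩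
  rw [← natCast_zmod_val i, hkw, Nat.add_sub_cancel]
  have hvanish : ((2 ^ (k + l + 1) : ℕ) : ZMod (2 ^ (k + l + 1))) = 0 := natCast_self _
  push_cast at hvanish ⊢
  linear_combination t * hvanish

end ZMod

namespace DihedralGroup

theorem exists_r_mem_of_ne_bot {m : ℕ} (h4 : (4 : ZMod m) ≠ 0)
    {H : Subgroup (DihedralGroup m)} (hr2 : r 2 ∈ H) {N : Subgroup H} (hN : N.Normal)
    (hbot : N ≠ ⊥) : ∃ y ∈ N, ∃ i ≠ 0, (y : DihedralGroup m) = r i := by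
  obtain ⟨x, hxN, hx1⟩ := N.bot_or_exists_ne_one.resolve_left hbot
  cases hx : (x : DihedralGroup m) with
  | r j =>
    refine ⟨x, hxN, j, ?_, hx⟩
    rintro rfl
    exact hx1 (Subtype.ext hx)
  | sr j =>
    let g : H := ⟨r 2, hr2⟩
    refine ⟨g * x * g⁻¹ * x, N.mul_mem (hN.conj_mem x hxN g) hxN, 4, h4, ?_⟩
    simp only [Subgroup.coe_mul, Subgroup.coe_inv, hx, g, inv_r, r_mul_sr, sr_mul_r, sr_mul_sr]
    ring_nf

theorem r_two_pow_pred_mem {n : ℕ} (hn : 3 ≤ n) {H : Subgroup (DihedralGroup (2 ^ n))}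
    (hidx : H.index = 2) {N : Subgroup H} (hN : N.Normal) (hbot : N ≠ ⊥) :
    ∃ y ∈ N, (y : DihedralGroup (2 ^ n)) = r (2 ^ (n - 1)) := by
  have h4 : (4 : ZMod (2 ^ n)) ≠ 0 := by
    have h22 := ZMod.two_pow_ne_zero (k := 2) (n := n) (by omega)
    norm_num at h22
    exact h22
  have hr2 : r 2 ∈ H := by simpa [r_pow] using Subgroup.sq_mem_of_index_two hidx (r 1)
  obtain ⟨y, hyN, i, hi, hy⟩ := exists_r_mem_of_ne_bot h4 hr2 hN hbot
  obtain ⟨c, hc⟩ := ZMod.exists_mul_eq_two_pow_pred hi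
  exact ⟨y ^ c, N.pow_mem hyN c, by rw [Subgroup.coe_pow, hy, r_pow, hc]⟩

end DihedralGroup

/-- For `n ≥ 3`, every subgroup of index `2` of the dihedral group `D_{2^n}`
(of order `2^{n+1}`) is subdirectly irreducible: any two nontrivial normal
subgroups of it have nontrivial intersection. -/
theorem dihedral_index_two_subgroups_subdirectly_irreducible
    (n : ℕ) (hn : 3 ≤ n)
    (H : Subgroup (DihedralGroup (2 ^ n))) (hidx : H.index = 2)
    (N₁ N₂ : Subgroup H) (hN₁ : N₁.Normal) (hN₂ : N₂.Normal)
    (h₁ : N₁ ≠ ⊥) (h₂ : N₂ ≠ ⊥) :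
    N₁ ⊓ N₂ ≠ ⊥ := by
  obtain ⟨y₁, hy₁, hz₁⟩ := r_two_pow_pred_mem hn hidx hN₁ h₁
  obtain ⟨y₂, hy₂, hz₂⟩ := r_two_pow_pred_mem hn hidx hN₂ h₂
  obtain rfl : y₁ = y₂ := Subtype.ext (hz₁.trans hz₂.symm)
  have hz : (r (2 ^ (n - 1)) : DihedralGroup (2 ^ n)) ≠ 1 := by
    rw [one_def, Ne, r.injEq]
    exact ZMod.two_pow_ne_zero (by omega)
  intro hbot
  have hy₁_one : y₁ = 1 := (Subgroup.eq_bot_iff_forall _).mp hbot y₁ ⟨hy₁, hy₂⟩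
  exact hz (by rw [← hz₁, hy₁_one, OneMemClass.coe_one])
end

section
/- Let n ≥ 3 and let G be the dihedral group of order 2^{n+1} (Mathlib's DihedralGroup (2^n)). If H₁ and H₂ are distinct subgroups of G of index 2 that are isomorphic as groups, then the Frattini subgroup of H₁ and the Frattini subgroup of H₂ are equal as subgroups of G, and this common Frattini subgroup is a nontrivial normal subgroup of G. -/
/-!
The index-two subgroups of `D_{2^n}` are the cyclic rotation subgroup `⟨r⟩` and the two
dihedral subgroups `⟨r², s rᶜ⟩`; the first is abelian and the others are not, so two distinct
isomorphic ones are both dihedral. The Frattini subgroup of `⟨r², s rᶜ⟩` is `⟨r⁴⟩`: it contains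
`(r²)²` because maximal subgroups of a `p`-group have index `p`, and it lies in the two
index-two subgroups `⟨r⁴, s rᶜ⟩` and `⟨r⁴, s r^{c+2}⟩`, which meet in `⟨r⁴⟩`. It is normal in
`D_{2^n}` because a characteristic subgroup of a normal subgroup is normal.
-/

open Subgroup DihedralGroup

namespace Subgroup

variable {G : Type*} [Group G]

theorem isCoatom_of_index_prime {H : Subgroup G} (hH : H.index.Prime) : IsCoatom H := by
  refine ⟨fun h => hH.ne_one (index_eq_one.mpr h), fun K hK => ?_⟩
  have hmul := relIndex_mul_index hK.le
  rcases (Nat.dvd_prime hH).mp (Dvd.intro_left _ hmul) with h1 | hp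
  · exact index_eq_one.mp h1
  · rw [hp, mul_eq_right₀ hH.ne_zero, relIndex_eq_one] at hmul
    exact absurd hmul hK.not_ge

theorem map_subtype_frattini_le {H K : Subgroup G} (hK : (K.relIndex H).Prime) :
    (frattini H).map H.subtype ≤ K :=
  calc (frattini H).map H.subtype
      ≤ (K.subgroupOf H).map H.subtype :=
        map_mono (frattini_le_coatom (isCoatom_of_index_prime hK))
    _ ≤ K := by rw [subgroupOf_map_subtype]; exact inf_le_left

end Subgroup

namespace IsPGroup

variable {G : Type*} [Group G] [Finite G] {p : ℕ} [hp : Fact p.Prime]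

theorem index_eq_of_isCoatom (hG : IsPGroup p G) {M : Subgroup G} (hM : IsCoatom M) :
    M.index = p := by
  obtain ⟨k, hk⟩ := iff_card.mp (hG.to_subgroup M)
  obtain ⟨j, hj⟩ := hG.index M
  have hj0 : j ≠ 0 := by
    rintro rfl
    exact hM.1 (index_eq_one.mp (by simpa using hj))
  have hdvd : p ^ (k + 1) ∣ Nat.card G := by
    rw [← M.card_mul_index, hk, hj, pow_succ]
    exact mul_dvd_mul_left _ (dvd_pow_self p hj0)
  obtain ⟨K, hK, hMK⟩ := Sylow.exists_subgroup_card_pow_succ hdvd hk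
  have hMK' : M ≠ K := by
    rintro rfl
    rw [hk] at hK
    exact absurd hK (pow_lt_pow_right₀ hp.out.one_lt k.lt_succ_self).ne
  have hcard : Nat.card G = p ^ (k + 1) := by
    rw [← hK, hM.2 K (lt_of_le_of_ne hMK hMK'), card_top]
  have := M.card_mul_index
  rw [hcard, hk, pow_succ] at this
  exact Nat.eq_of_mul_eq_mul_left (pow_pos hp.out.pos k) this

theorem pow_mem_frattini (hG : IsPGroup p G) (g : G) : g ^ p ∈ frattini G := by
  simp only [frattini, Order.radical, mem_iInf]
  intro M hM
  have := hG.isNilpotent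
  have := NormalizerCondition.normal_of_coatom M Group.normalizerCondition_of_isNilpotent hM
  simpa [hG.index_eq_of_isCoatom hM] using M.pow_index_mem g

theorem pow_mem_map_subtype_frattini (hG : IsPGroup p G) {H : Subgroup G} {g : G} (hg : g ∈ H) :
    g ^ p ∈ (frattini H).map H.subtype :=
  ⟨⟨g, hg⟩ ^ p, (hG.to_subgroup H).pow_mem_frattini _, rfl⟩

end IsPGroup

theorem MulEquiv.isMulCommutative {G G' : Type*} [Mul G] [Mul G'] (e : G ≃* G')
    [IsMulCommutative G] : IsMulCommutative G' :=
  isMulCommutative_iff.mpr fun a b => e.symm.injective (by simp only [map_mul, mul_comm'])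

theorem ZMod.exists_eq_two_mul_or_eq_two_mul_add_one {m : ℕ} (x : ZMod m) :
    ∃ k, x = 2 * k ∨ x = 2 * k + 1 := by
  obtain ⟨z, rfl⟩ := ZMod.intCast_surjective x
  obtain ⟨k, rfl | rfl⟩ := Int.even_or_odd' z
  · exact ⟨k, Or.inl (by push_cast; ring)⟩
  · exact ⟨k, Or.inr (by push_cast; ring)⟩

theorem ZMod.xor_four_dvd_add_two {m : ℕ} (h42 : ¬ (4 : ZMod m) ∣ 2) {x : ZMod m}
    (hx : 2 ∣ x) : Xor (4 ∣ x + 2) (4 ∣ x) := by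
  obtain ⟨y, rfl⟩ := hx
  obtain ⟨k, rfl | rfl⟩ := exists_eq_two_mul_or_eq_two_mul_add_one y
  · have h4 : (4 : ZMod m) ∣ 2 * (2 * k) := ⟨k, by ring⟩
    exact Or.inr ⟨h4, fun h => h42 ((dvd_add_right h4).mp h)⟩
  · have h4 : (4 : ZMod m) ∣ 4 * k := dvd_mul_right 4 k
    refine Or.inl ⟨⟨k + 1, by ring⟩, fun h => h42 ((dvd_add_right h4).mp ?_)⟩
    rwa [show 4 * k + 2 = 2 * (2 * k + 1) by ring]

theorem ZMod.not_four_dvd_two {n : ℕ} (hn : 2 ≤ n) : ¬ (4 : ZMod (2 ^ n)) ∣ 2 := by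
  rintro ⟨k, hk⟩
  have h4 : 4 ∣ 2 ^ n := pow_dvd_pow 2 hn
  have := congrArg (ZMod.castHom h4 (ZMod 4)) hk
  rw [map_mul, map_ofNat, map_ofNat] at this
  generalize ZMod.castHom h4 (ZMod 4) k = y at this
  revert y; decide

theorem ZMod.four_ne_zero_of_three_le {n : ℕ} (hn : 3 ≤ n) : (4 : ZMod (2 ^ n)) ≠ 0 := by
  rw [show (4 : ZMod (2 ^ n)) = (4 : ℕ) by norm_cast, Ne, ZMod.natCast_eq_zero_iff]
  intro h
  have := (Nat.pow_le_pow_right two_pos hn).trans (Nat.le_of_dvd four_pos h)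
  norm_num at this

namespace DihedralGroup

variable {m : ℕ}

/-- The subgroup generated by `r d` and `sr c`. -/
def dihedralSubgroup (d c : ZMod m) : Subgroup (DihedralGroup m) where
  carrier := {x | match x with | r i => d ∣ i | sr i => d ∣ i - c}
  mul_mem' := by
    rintro (i | i) (j | j) hi hj
    · exact (dvd_add hi hj : d ∣ i + j)
    · exact (by convert dvd_sub hj hi using 1; ring : d ∣ j - i - c)
    · exact (by convert dvd_add hi hj using 1; ring : d ∣ i + j - c)
    · exact (by convert dvd_sub hj hi using 1; ring : d ∣ j - i)
  one_mem' := dvd_zero d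
  inv_mem' := by
    rintro (i | i) hi
    · exact (dvd_neg).mpr hi
    · exact hi

@[simp] theorem r_mem_dihedralSubgroup {d c i : ZMod m} : r i ∈ dihedralSubgroup d c ↔ d ∣ i :=
  Iff.rfl

@[simp] theorem sr_mem_dihedralSubgroup {d c i : ZMod m} :
    sr i ∈ dihedralSubgroup d c ↔ d ∣ i - c :=
  Iff.rfl

section IndexTwo

variable {H : Subgroup (DihedralGroup m)}

theorem r_two_mul_mem_of_index_eq_two (h : H.index = 2) (k : ZMod m) : r (2 * k) ∈ H := by
  simpa only [sq, r_mul_r, two_mul] using sq_mem_of_index_two h (r k)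

theorem r_mem_iff_of_index_eq_two (h : H.index = 2) (h1 : r 1 ∉ H) (i : ZMod m) :
    r i ∈ H ↔ 2 ∣ i := by
  constructor
  · intro hi
    obtain ⟨k, rfl | rfl⟩ := ZMod.exists_eq_two_mul_or_eq_two_mul_add_one i
    · exact dvd_mul_right 2 k
    · rw [← r_mul_r, mul_mem_iff_of_index_two h] at hi
      exact absurd (hi.mp (r_two_mul_mem_of_index_eq_two h k)) h1
  · rintro ⟨k, rfl⟩
    exact r_two_mul_mem_of_index_eq_two h k

theorem sr_mem_iff_of_index_eq_two (h : H.index = 2) (h1 : r 1 ∉ H) {c : ZMod m}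
    (hc : sr c ∈ H) (i : ZMod m) :
    sr i ∈ H ↔ 2 ∣ i - c := by
  rw [← mul_mem_cancel_left hc, sr_mul_sr, r_mem_iff_of_index_eq_two h h1]

theorem exists_sr_mem_of_index_eq_two (h : H.index = 2) (h1 : r 1 ∉ H) : ∃ c, sr c ∈ H := by
  by_cases h0 : sr 0 ∈ H
  · exact ⟨0, h0⟩
  · refine ⟨0 - 1, ?_⟩
    rw [← r_mul_sr, mul_mem_iff_of_index_two h]
    exact iff_of_false h1 h0

theorem eq_dihedralSubgroup_two_of_index_eq_two (h : H.index = 2) (h1 : r 1 ∉ H) {c : ZMod m}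
    (hc : sr c ∈ H) :
    H = dihedralSubgroup 2 c := by
  ext (i | i)
  · rw [r_mem_iff_of_index_eq_two h h1, r_mem_dihedralSubgroup]
  · rw [sr_mem_iff_of_index_eq_two h h1 hc, sr_mem_dihedralSubgroup]

theorem eq_zpowers_r_one_of_index_eq_two [NeZero m] (h : H.index = 2) (h1 : r 1 ∈ H) :
    H = zpowers (r 1) := by
  refine (eq_of_le_of_card_ge (zpowers_le.mpr h1) ?_).symm
  have hH := H.card_mul_index
  rw [h, nat_card] at hH
  rw [Nat.card_zpowers, orderOf_r_one]
  omega

theorem eq_zpowers_r_one_or_eq_dihedralSubgroup_two [NeZero m] (h : H.index = 2) :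
    H = zpowers (r 1) ∨ ∃ c, H = dihedralSubgroup 2 c := by
  by_cases h1 : r 1 ∈ H
  · exact Or.inl (eq_zpowers_r_one_of_index_eq_two h h1)
  · obtain ⟨c, hc⟩ := exists_sr_mem_of_index_eq_two h h1
    exact Or.inr ⟨c, eq_dihedralSubgroup_two_of_index_eq_two h h1 hc⟩

end IndexTwo

theorem not_isMulCommutative_dihedralSubgroup_two (h4 : (4 : ZMod m) ≠ 0) (c : ZMod m) :
    ¬ IsMulCommutative (dihedralSubgroup 2 c) := by
  intro _
  have hcomm : r 2 * sr c = sr c * r 2 :=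
    setLike_mul_comm (s := dihedralSubgroup 2 c) (by simp) (by simp)
  rw [r_mul_sr, sr_mul_r, sr.injEq] at hcomm
  exact h4 (by linear_combination -hcomm)

theorem exists_eq_dihedralSubgroup_two_of_mulEquiv [NeZero m] (h4 : (4 : ZMod m) ≠ 0)
    {H₁ H₂ : Subgroup (DihedralGroup m)} (h₁ : H₁.index = 2) (h₂ : H₂.index = 2) (hne : H₁ ≠ H₂)
    (e : H₁ ≃* H₂) : ∃ c, H₁ = dihedralSubgroup 2 c := by
  refine (eq_zpowers_r_one_or_eq_dihedralSubgroup_two h₁).resolve_left fun hH₁ => ?_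
  rcases eq_zpowers_r_one_or_eq_dihedralSubgroup_two h₂ with hH₂ | ⟨c, rfl⟩
  · exact hne (hH₁.trans hH₂.symm)
  · subst hH₁
    exact not_isMulCommutative_dihedralSubgroup_two h4 c e.isMulCommutative

theorem relIndex_dihedralSubgroup_four (h42 : ¬ (4 : ZMod m) ∣ 2) {c c' : ZMod m}
    (hc : 2 ∣ c' - c) : (dihedralSubgroup 4 c').relIndex (dihedralSubgroup 2 c) = 2 := by
  rw [relIndex_eq_two_iff]
  refine ⟨r 2, by simp, ?_⟩
  rintro (i | i) hi
  · simpa only [r_mul_r, r_mem_dihedralSubgroup] using ZMod.xor_four_dvd_add_two h42 hi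
  · have hi' : 2 ∣ i - c' := by simpa using dvd_sub (sr_mem_dihedralSubgroup.mp hi) hc
    simpa only [sr_mul_r, sr_mem_dihedralSubgroup, add_sub_right_comm]
      using ZMod.xor_four_dvd_add_two h42 hi'

theorem map_subtype_frattini_dihedralSubgroup_two_le (h42 : ¬ (4 : ZMod m) ∣ 2) (c : ZMod m) :
    (frattini (dihedralSubgroup 2 c)).map (dihedralSubgroup 2 c).subtype ≤ zpowers (r 4) := by
  intro x hx
  have h₀ := map_subtype_frattini_le (K := dihedralSubgroup 4 c)
    (by rw [relIndex_dihedralSubgroup_four h42 (by simp)]; exact Nat.prime_two) hx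
  have h₂ := map_subtype_frattini_le (K := dihedralSubgroup 4 (c + 2))
    (by rw [relIndex_dihedralSubgroup_four h42 (by simp)]; exact Nat.prime_two) hx
  rcases x with i | i
  · obtain ⟨k, rfl⟩ := r_mem_dihedralSubgroup.mp h₀
    obtain ⟨z, rfl⟩ := ZMod.intCast_surjective k
    exact ⟨z, r_zpow 4 z⟩
  · refine absurd ?_ h42
    simpa using dvd_sub (sr_mem_dihedralSubgroup.mp h₀) (sr_mem_dihedralSubgroup.mp h₂)

theorem isPGroup_two_pow (n : ℕ) : IsPGroup 2 (DihedralGroup (2 ^ n)) :=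
  IsPGroup.of_card (by rw [nat_card, ← pow_succ'])

theorem map_subtype_frattini_dihedralSubgroup_two {n : ℕ} (hn : 2 ≤ n) (c : ZMod (2 ^ n)) :
    (frattini (dihedralSubgroup 2 c)).map (dihedralSubgroup 2 c).subtype = zpowers (r 4) := by
  refine le_antisymm
    (map_subtype_frattini_dihedralSubgroup_two_le (ZMod.not_four_dvd_two hn) c) (zpowers_le.mpr ?_)
  have h2 : r 2 ∈ dihedralSubgroup 2 c := by simp
  have h4 := (isPGroup_two_pow n).pow_mem_map_subtype_frattini h2
  rwa [sq, r_mul_r, two_add_two_eq_four] at h4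

end DihedralGroup

/-- For `n ≥ 3`, if `H₁` and `H₂` are distinct subgroups of index `2` of the
dihedral group `D_{2^n}` (of order `2^{n+1}`) that are isomorphic as groups,
then their Frattini subgroups coincide as subgroups of `D_{2^n}`, and this
common Frattini subgroup is a nontrivial normal subgroup of `D_{2^n}`. -/
theorem dihedral_isomorphic_index_two_subgroups_share_frattini
    (n : ℕ) (hn : 3 ≤ n)
    (H₁ H₂ : Subgroup (DihedralGroup (2 ^ n)))
    (h₁ : H₁.index = 2) (h₂ : H₂.index = 2)
    (hne : H₁ ≠ H₂) (hiso : Nonempty (H₁ ≃* H₂)) :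
    (frattini H₁).map H₁.subtype = (frattini H₂).map H₂.subtype ∧
      (frattini H₁).map H₁.subtype ≠ ⊥ ∧
      ((frattini H₁).map H₁.subtype).Normal := by
  obtain ⟨e⟩ := hiso
  have h4 := ZMod.four_ne_zero_of_three_le hn
  obtain ⟨c₁, rfl⟩ := exists_eq_dihedralSubgroup_two_of_mulEquiv h4 h₁ h₂ hne e
  obtain ⟨c₂, rfl⟩ := exists_eq_dihedralSubgroup_two_of_mulEquiv h4 h₂ h₁ hne.symm e.symm
  have hΦ := map_subtype_frattini_dihedralSubgroup_two (show 2 ≤ n by omega)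
  have := normal_of_index_eq_two h₁
  refine ⟨by rw [hΦ, hΦ], ?_, inferInstance⟩
  rw [hΦ, Ne, zpowers_eq_bot, one_def, r.injEq]
  exact h4
end
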